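/- For every integer k ≥ 1, setting n = 2^k + 2 and p = 2^k + 1, the n×n matrix A = (C_p ⊕ C_1) + T(2, n, p, p), viewed over ℚ, has finite multiplicative order equal to 2^{k+1}; moreover, every m×m permutation matrix of multiplicative order 2^{k+1} satisfies m ≥ 2^{k+1}. -/

import Mathlib

open Polynomial

/-- `Ccyc k` is the `k × k` companion matrix of `x^k - 1`: the permutation matrix with `1`
in (1-based) positions `(i+1, i)` for `1 ≤ i ≤ k-1` and in position `(1, k)`. -/
def Ccyc (k : ℕ) : Matrix (Fin k) (Fin k) ℚ :=
  Matrix.of fun r c => if (r : ℕ) = ((c : ℕ) + 1) % k then 1 else 0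

/-- `Tblock n i1 j1 i2 j2` is the `n × n` matrix with entry `1` in (1-based) positions
`(i1, j1)` and `(i2, j2)`, entry `-1` in positions `(i1, j2)` and `(i2, j1)`, and `0`
elsewhere. -/
def Tblock (n i1 j1 i2 j2 : ℕ) : Matrix (Fin n) (Fin n) ℚ :=
  Matrix.of fun r c =>
    (if (r : ℕ) + 1 = i1 ∧ (c : ℕ) + 1 = j1 then (1 : ℚ) else 0)
      + (if (r : ℕ) + 1 = i2 ∧ (c : ℕ) + 1 = j2 then (1 : ℚ) else 0)
      - (if (r : ℕ) + 1 = i1 ∧ (c : ℕ) + 1 = j2 then (1 : ℚ) else 0)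
      - (if (r : ℕ) + 1 = i2 ∧ (c : ℕ) + 1 = j1 then (1 : ℚ) else 0)

/-- Matrix direct sum (block diagonal sum), realized on `Fin (p + q)`. -/
def dsum {p q : ℕ} (A : Matrix (Fin p) (Fin p) ℚ) (B : Matrix (Fin q) (Fin q) ℚ) :
    Matrix (Fin (p + q)) (Fin (p + q)) ℚ :=
  Matrix.reindex finSumFinEquiv finSumFinEquiv (Matrix.fromBlocks A 0 0 B)

/-- A square rational matrix has finite multiplicative order if `A ^ t = 1` for some `t > 0`. -/
def HasFinOrder {n : ℕ} (A : Matrix (Fin n) (Fin n) ℚ) : Prop :=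
  ∃ t : ℕ, 0 < t ∧ A ^ t = 1

/-- `OrderIs A t` : `t` is the least positive integer with `A ^ t = 1`. -/
def OrderIs {n : ℕ} (A : Matrix (Fin n) (Fin n) ℚ) (t : ℕ) : Prop :=
  IsLeast {s : ℕ | 0 < s ∧ A ^ s = 1} t

/-- Alternating sign matrix: entries in `{0, 1, -1}`, all partial row- and column-sums equal
`0` or `1`, and every full row and column sums to `1`. -/
def IsASM {n : ℕ} (A : Matrix (Fin n) (Fin n) ℚ) : Prop :=
  (∀ i j : Fin n, A i j = 0 ∨ A i j = 1 ∨ A i j = -1) ∧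
  (∀ i k : Fin n, (∑ j ∈ Finset.Iic k, A i j) = 0 ∨ (∑ j ∈ Finset.Iic k, A i j) = 1) ∧
  (∀ j k : Fin n, (∑ i ∈ Finset.Iic k, A i j) = 0 ∨ (∑ i ∈ Finset.Iic k, A i j) = 1) ∧
  (∀ i : Fin n, (∑ j, A i j) = 1) ∧
  (∀ j : Fin n, (∑ i, A i j) = 1)

/-- Permutation matrix. -/
def IsPermMat {n : ℕ} (A : Matrix (Fin n) (Fin n) ℚ) : Prop :=
  ∃ σ : Equiv.Perm (Fin n), ∀ i j, A i j = if σ i = j then 1 else 0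

/-- `A` is permutation similar to an alternating sign matrix:
`Pᵀ * A * P` is an ASM for some permutation matrix `P`. -/
def PermSimilarToASM {n : ℕ} (A : Matrix (Fin n) (Fin n) ℚ) : Prop :=
  ∃ P B : Matrix (Fin n) (Fin n) ℚ, IsPermMat P ∧ IsASM B ∧ B = P.transpose * A * P

/-- Similarity over `ℚ`. -/
def SimilarQ {n : ℕ} (A B : Matrix (Fin n) (Fin n) ℚ) : Prop :=
  ∃ S : Matrix (Fin n) (Fin n) ℚ, IsUnit S ∧ B = S⁻¹ * A * S

/-- A `T`-block: a matrix of the form `± T(i1, j1, i2, j2)` with `i1 ≠ i2`, `j1 ≠ j2`. -/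
def IsTBlock {n : ℕ} (M : Matrix (Fin n) (Fin n) ℚ) : Prop :=
  ∃ i1 j1 i2 j2 : ℕ, 1 ≤ i1 ∧ i1 ≤ n ∧ 1 ≤ j1 ∧ j1 ≤ n ∧ 1 ≤ i2 ∧ i2 ≤ n ∧ 1 ≤ j2 ∧ j2 ≤ n ∧
    i1 ≠ i2 ∧ j1 ≠ j2 ∧ (M = Tblock n i1 j1 i2 j2 ∨ M = -Tblock n i1 j1 i2 j2)

/-! With `q = 2 ^ k`, the matrix `A` sends `eⱼ ↦ eⱼ₊₁` for `j < q`, so on the differences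
`dⱼ = eⱼ₊₁ - eⱼ` (`j < q`) it acts as a negacyclic shift: `dⱼ ↦ dⱼ₊₁` and `d_{q-1} ↦ -d₀`.
Hence `A ^ q = -1` on the span `W` of the `dⱼ`, while `A - 1` maps every basis vector into `W`;
so `(A ^ q + 1) (A - 1) = 0`, which forces `A ^ (2q) = 1`, and `A ^ q d₀ = -d₀` shows
`A ^ q ≠ 1`. The order of a permutation is the lcm of its cycle lengths, so a permutation of
order `2 ^ (k+1)` has a cycle of that length. -/

open Matrix

theorem pow_two_mul_eq_one_of_pow_add_one_mul_sub_one_eq_zero {R : Type*} [Ring R] {a : R}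
    {q : ℕ} (h : (a ^ q + 1) * (a - 1) = 0) : a ^ (2 * q) = 1 := by
  rw [← sub_eq_zero]
  calc a ^ (2 * q) - 1 = (a ^ q + 1) * (a ^ q - 1) := by rw [two_mul, pow_add]; noncomm_ring
    _ = (a ^ q + 1) * (a - 1) * ∑ i ∈ Finset.range q, a ^ i := by rw [mul_assoc, mul_geom_sum]
    _ = 0 := by rw [h, zero_mul]

theorem Equiv.Perm.pow_le_card_of_orderOf_eq_prime_pow {α : Type*} [Fintype α] [DecidableEq α]
    {σ : Equiv.Perm α} {p e : ℕ} (hp : p.Prime) (h : orderOf σ = p ^ (e + 1)) :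
    p ^ (e + 1) ≤ Fintype.card α := by
  have hmem : p ^ (e + 1) ∈ σ.cycleType := by
    by_contra hnot
    have hdvd : σ.cycleType.lcm ∣ p ^ e := Multiset.lcm_dvd.2 fun a ha => by
      obtain ⟨j, hj, rfl⟩ := (Nat.dvd_prime_pow hp).1 (h ▸ σ.dvd_of_mem_cycleType ha)
      have : j ≠ e + 1 := by rintro rfl; exact hnot ha
      exact pow_dvd_pow p (by omega)
    rw [σ.lcm_cycleType, h, Nat.pow_dvd_pow_iff_le_right hp.one_lt] at hdvd
    omega
  exact (σ.le_card_support_of_mem_cycleType hmem).trans (Finset.card_le_univ _)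

theorem Equiv.Perm.permMatrix_injective {n R : Type*} [DecidableEq n] [MulZeroOneClass R]
    [Nontrivial R] : Function.Injective fun σ : Equiv.Perm n => σ.permMatrix R := by
  intro σ τ h
  ext i
  simpa [PEquiv.toMatrix_apply, Equiv.toPEquiv_apply, eq_comm] using congrFun (congrFun h i) (σ i)

theorem Equiv.Perm.orderOf_permMatrix {n R : Type*} [DecidableEq n] [Fintype n] [Semiring R]
    [Nontrivial R] (σ : Equiv.Perm n) : orderOf (σ.permMatrix R) = orderOf σ := by
  have hinj : Function.Injective (permMatrixHom (n := n) (R := R)) :=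
    fun σ τ h => inv_injective (Equiv.Perm.permMatrix_injective h)
  simpa using orderOf_injective _ hinj σ⁻¹

lemma IsPermMat.exists_orderOf_eq {m : ℕ} {P : Matrix (Fin m) (Fin m) ℚ} (hP : IsPermMat P) :
    ∃ σ : Equiv.Perm (Fin m), orderOf P = orderOf σ := by
  obtain ⟨σ, hσ⟩ := hP
  have : P = σ.permMatrix ℚ := by
    ext i j
    simp [hσ, PEquiv.toMatrix_apply, Equiv.toPEquiv_apply]
  exact ⟨σ, this ▸ σ.orderOf_permMatrix (R := ℚ)⟩

lemma orderIs_iff {n t : ℕ} {A : Matrix (Fin n) (Fin n) ℚ} :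
    OrderIs A t ↔ 0 < t ∧ orderOf A = t := by
  constructor
  · rintro ⟨⟨ht, hA⟩, hmin⟩
    exact ⟨ht, (orderOf_eq_iff ht).2 ⟨hA, fun s hst hs h => (hmin ⟨hs, h⟩).not_gt hst⟩⟩
  · rintro ⟨ht, rfl⟩
    exact ⟨⟨ht, pow_orderOf_eq_one A⟩, fun s ⟨hs, h⟩ => orderOf_le_of_pow_eq_one hs h⟩

lemma Tblock_apply (n i1 j1 i2 j2 : ℕ) (r c : Fin n) :
    Tblock n i1 j1 i2 j2 r c
      = ((if (r : ℕ) + 1 = i1 then 1 else 0) - (if (r : ℕ) + 1 = i2 then 1 else 0))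
        * ((if (c : ℕ) + 1 = j1 then 1 else 0) - (if (c : ℕ) + 1 = j2 then 1 else 0)) := by
  simp only [Tblock, of_apply, ite_and]
  split_ifs <;> norm_num

section dsum

variable {p : ℕ} (A : Matrix (Fin p) (Fin p) ℚ) (B : Matrix (Fin 1) (Fin 1) ℚ)

@[simp] lemma dsum_castSucc_castSucc (i j : Fin p) : dsum A B i.castSucc j.castSucc = A i j := by
  simp [dsum]

@[simp] lemma dsum_castSucc_last (i : Fin p) : dsum A B i.castSucc (Fin.last p) = 0 := by
  simp [dsum, finSumFinEquiv_symm_last]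

@[simp] lemma dsum_last_castSucc (j : Fin p) : dsum A B (Fin.last p) j.castSucc = 0 := by
  simp [dsum, finSumFinEquiv_symm_last]

@[simp] lemma dsum_last_last : dsum A B (Fin.last p) (Fin.last p) = B 0 0 := by
  simp [dsum, finSumFinEquiv_symm_last]

end dsum

def twistedCycle (q : ℕ) : Matrix (Fin (q + 1 + 1)) (Fin (q + 1 + 1)) ℚ :=
  dsum (Ccyc (q + 1)) (Ccyc 1) + Tblock (q + 1 + 1) 2 (q + 2) (q + 1) (q + 1)

-- Indexed by `ℕ` and 0-based, unlike the 1-based indices of `Tblock`; it is `0` when `N ≤ j`.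
def unitVec (N j : ℕ) : Fin N → ℚ := fun i => if (i : ℕ) = j then 1 else 0

def diffVec (N j : ℕ) : Fin N → ℚ := unitVec N (j + 1) - unitVec N j

lemma mulVec_unitVec {N j : ℕ} (M : Matrix (Fin N) (Fin N) ℚ) (hj : j < N) :
    M *ᵥ unitVec N j = fun i => M i ⟨j, hj⟩ := by
  have : unitVec N j = Pi.single ⟨j, hj⟩ 1 := by
    funext i
    simp [unitVec, Pi.single_apply, Fin.ext_iff]
  rw [this, mulVec_single_one]
  rfl

section twistedCycle

variable {q : ℕ}

lemma twistedCycle_mulVec_unitVec_of_lt {j : ℕ} (hj : j < q) :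
    twistedCycle q *ᵥ unitVec _ j = unitVec _ (j + 1) := by
  rw [mulVec_unitVec _ (by omega),
    show (⟨j, _⟩ : Fin (q + 1 + 1)) = Fin.castSucc ⟨j, hj.trans q.lt_succ_self⟩ from rfl]
  funext i
  induction i using Fin.lastCases <;>
    simp only [twistedCycle, Matrix.add_apply, Tblock_apply, dsum_castSucc_castSucc,
      dsum_last_castSucc, Ccyc, of_apply, Fin.val_castSucc, Fin.val_last, unitVec,
      Nat.mod_eq_of_lt (show j + 1 < q + 1 by omega)] <;>
    split_ifs <;> (try norm_num) <;> omega

lemma twistedCycle_mulVec_unitVec_self (q : ℕ) :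
    twistedCycle q *ᵥ unitVec _ q = unitVec _ 0 + unitVec _ q - unitVec _ 1 := by
  rw [mulVec_unitVec _ (by omega),
    show (⟨q, _⟩ : Fin (q + 1 + 1)) = Fin.castSucc (Fin.last q) from rfl]
  funext i
  induction i using Fin.lastCases <;>
    simp only [twistedCycle, Matrix.add_apply, Tblock_apply, dsum_castSucc_castSucc,
      dsum_last_castSucc, Ccyc, of_apply, Fin.val_castSucc, Fin.val_last, unitVec, Nat.mod_self,
      Pi.add_apply, Pi.sub_apply] <;>
    split_ifs <;> (try norm_num) <;> omega

lemma twistedCycle_mulVec_unitVec_last (q : ℕ) :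
    twistedCycle q *ᵥ unitVec _ (q + 1) = unitVec _ (q + 1) + unitVec _ 1 - unitVec _ q := by
  rw [mulVec_unitVec _ (by omega),
    show (⟨q + 1, _⟩ : Fin (q + 1 + 1)) = Fin.last (q + 1) from rfl]
  funext i
  induction i using Fin.lastCases <;>
    simp only [twistedCycle, Matrix.add_apply, Tblock_apply, dsum_castSucc_last, dsum_last_last,
      Ccyc, of_apply, Fin.val_castSucc, Fin.val_last, Fin.val_eq_zero, unitVec, Pi.add_apply,
      Pi.sub_apply] <;>
    split_ifs <;> (try norm_num) <;> omega

lemma twistedCycle_mulVec_diffVec_of_lt {j : ℕ} (hj : j + 1 < q) :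
    twistedCycle q *ᵥ diffVec _ j = diffVec _ (j + 1) := by
  rw [diffVec, mulVec_sub, twistedCycle_mulVec_unitVec_of_lt hj,
    twistedCycle_mulVec_unitVec_of_lt (by omega), diffVec]

lemma twistedCycle_mulVec_diffVec_pred (hq : 0 < q) :
    twistedCycle q *ᵥ diffVec _ (q - 1) = -diffVec _ 0 := by
  rw [diffVec, Nat.sub_add_cancel hq, mulVec_sub, twistedCycle_mulVec_unitVec_self,
    twistedCycle_mulVec_unitVec_of_lt (by omega), Nat.sub_add_cancel hq, diffVec]
  abel

lemma twistedCycle_pow_mulVec_diffVec_zero {j : ℕ} (hj : j < q) :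
    twistedCycle q ^ j *ᵥ diffVec _ 0 = diffVec _ j := by
  induction j with
  | zero => rw [pow_zero, one_mulVec]
  | succ j ih =>
    rw [pow_succ', ← mulVec_mulVec, ih (by omega), twistedCycle_mulVec_diffVec_of_lt hj]

lemma twistedCycle_pow_mulVec_diffVec {j : ℕ} (hj : j < q) :
    twistedCycle q ^ q *ᵥ diffVec _ j = -diffVec _ j := by
  have hq : 0 < q := by omega
  have h0 : twistedCycle q ^ q *ᵥ diffVec _ 0 = -diffVec _ 0 := by
    rw [← mul_pow_sub_one hq.ne', ← mulVec_mulVec,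
      twistedCycle_pow_mulVec_diffVec_zero (by omega), twistedCycle_mulVec_diffVec_pred hq]
  rw [← twistedCycle_pow_mulVec_diffVec_zero hj, mulVec_mulVec, ← pow_mul_comm, ← mulVec_mulVec,
    h0, mulVec_neg]

lemma twistedCycle_pow_ne_one (hq : 0 < q) : twistedCycle q ^ q ≠ 1 := by
  intro h
  have := congrFun (twistedCycle_pow_mulVec_diffVec hq) 0
  rw [h, one_mulVec] at this
  norm_num [diffVec, unitVec] at this

def diffSpan (q : ℕ) : Submodule ℚ (Fin (q + 1 + 1) → ℚ) :=
  Submodule.span ℚ (Set.range fun j : Fin q => diffVec _ j)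

lemma diffVec_mem_diffSpan {j : ℕ} (hj : j < q) : diffVec _ j ∈ diffSpan q :=
  Submodule.subset_span ⟨⟨j, hj⟩, rfl⟩

lemma twistedCycle_pow_mulVec_of_mem_diffSpan {v : Fin (q + 1 + 1) → ℚ} (hv : v ∈ diffSpan q) :
    twistedCycle q ^ q *ᵥ v = -v := by
  refine LinearMap.eqOn_span (f := (twistedCycle q ^ q).mulVecLin) (g := -LinearMap.id) ?_ hv
  rintro _ ⟨j, rfl⟩
  exact twistedCycle_pow_mulVec_diffVec j.isLt

lemma twistedCycle_sub_one_mulVec_mem_diffSpan (hq : 0 < q) (j : Fin (q + 1 + 1)) :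
    (twistedCycle q - 1) *ᵥ Pi.single j 1 ∈ diffSpan q := by
  have hj : Pi.single j 1 = unitVec _ j := by
    funext i
    simp [unitVec, Pi.single_apply, Fin.ext_iff]
  rw [hj, sub_mulVec, one_mulVec]
  obtain hjq | hjq | hjq : (j : ℕ) < q ∨ (j : ℕ) = q ∨ (j : ℕ) = q + 1 := by omega
  · rw [twistedCycle_mulVec_unitVec_of_lt hjq]
    exact diffVec_mem_diffSpan hjq
  · rw [hjq, twistedCycle_mulVec_unitVec_self,
      show unitVec _ 0 + unitVec _ q - unitVec _ 1 - unitVec _ q = -diffVec (q + 1 + 1) 0 by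
        rw [diffVec]; abel]
    exact neg_mem (diffVec_mem_diffSpan hq)
  · have htel : ∑ t ∈ Finset.range q, diffVec (q + 1 + 1) t = unitVec _ q - unitVec _ 0 :=
      Finset.sum_range_sub _ q
    rw [hjq, twistedCycle_mulVec_unitVec_last,
      show unitVec _ (q + 1) + unitVec _ 1 - unitVec _ q - unitVec _ (q + 1)
          = diffVec (q + 1 + 1) 0 - ∑ t ∈ Finset.range q, diffVec _ t by
        rw [htel, diffVec]; abel]
    exact sub_mem (diffVec_mem_diffSpan hq)
      (sum_mem fun t ht => diffVec_mem_diffSpan (Finset.mem_range.1 ht))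

lemma twistedCycle_pow_add_one_mul_sub_one (hq : 0 < q) :
    (twistedCycle q ^ q + 1) * (twistedCycle q - 1) = 0 := by
  refine ext_of_mulVec_single fun j => ?_
  rw [← mulVec_mulVec, add_mulVec, one_mulVec, zero_mulVec,
    twistedCycle_pow_mulVec_of_mem_diffSpan (twistedCycle_sub_one_mulVec_mem_diffSpan hq j),
    neg_add_cancel]

end twistedCycle

lemma orderOf_twistedCycle_two_pow (k : ℕ) : orderOf (twistedCycle (2 ^ k)) = 2 ^ (k + 1) := by
  have hq : 0 < 2 ^ k := by positivity
  refine orderOf_eq_prime_pow (twistedCycle_pow_ne_one hq) ?_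
  rw [pow_succ']
  exact pow_two_mul_eq_one_of_pow_add_one_mul_sub_one_eq_zero
    (twistedCycle_pow_add_one_mul_sub_one hq)

theorem stmt17_general (k : ℕ) (n p : ℕ) (hn : n = 2 ^ k + 2) (hp : p = 2 ^ k + 1)
    (A : Matrix (Fin (p + 1)) (Fin (p + 1)) ℚ)
    (hA : A = dsum (Ccyc p) (Ccyc 1) + Tblock (p + 1) 2 n p p) :
    OrderIs A (2 ^ (k + 1)) ∧
      ∀ (m : ℕ) (P : Matrix (Fin m) (Fin m) ℚ),
        IsPermMat P → OrderIs P (2 ^ (k + 1)) → 2 ^ (k + 1) ≤ m := by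
  subst hn hp hA
  refine ⟨orderIs_iff.2 ⟨by positivity, orderOf_twistedCycle_two_pow k⟩, fun m P hP hord => ?_⟩
  obtain ⟨σ, hσ⟩ := hP.exists_orderOf_eq
  simpa using σ.pow_le_card_of_orderOf_eq_prime_pow Nat.prime_two (hσ ▸ (orderIs_iff.1 hord).2)

theorem stmt17 (k : ℕ) (hk : 1 ≤ k) (n p : ℕ) (hn : n = 2 ^ k + 2) (hp : p = 2 ^ k + 1)
    (A : Matrix (Fin (p + 1)) (Fin (p + 1)) ℚ)
    (hA : A = dsum (Ccyc p) (Ccyc 1) + Tblock (p + 1) 2 n p p) :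
    OrderIs A (2 ^ (k + 1)) ∧
      ∀ (m : ℕ) (P : Matrix (Fin m) (Fin m) ℚ),
        IsPermMat P → OrderIs P (2 ^ (k + 1)) → 2 ^ (k + 1) ≤ m :=
  stmt17_general k n p hn hp A hA
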